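/- For (m,n) ∈ {(1,2), (2,1), (3,1), (3,2)}, the spider Sp(1^[m], 2^[n]) has local antimagic total chromatic number 2. -/
import Mathlib


open Finset

variable {V : Type*} [Fintype V] [DecidableEq V]

/-- The weight of a vertex `u` under the total labeling given by vertex labels `fv`
and edge labels `fe` : `w(u) = f(u) + \sum_{e incident to u} f(e)`. -/
def latWeight (G : SimpleGraph V) [DecidableRel G.Adj]
    (fv : V → ℕ) (fe : Sym2 V → ℕ) (u : V) : ℕ :=
  fv u + ∑ v ∈ G.neighborFinset u, fe s(u, v)

/-- `fv, fe` together form a bijection from `V(G) ∪ E(G)` onto `{1, …, p + q}`,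
where `p` is the order and `q` is the size of `G`. -/
def IsTotalLabeling (G : SimpleGraph V) [DecidableRel G.Adj]
    (fv : V → ℕ) (fe : Sym2 V → ℕ) : Prop :=
  Set.BijOn (Sum.elim fv (fun e : G.edgeSet => fe (e : Sym2 V))) Set.univ
    (Set.Icc 1 (Fintype.card V + G.edgeFinset.card))

/-- A local antimagic total labeling of `G` : a bijective total labeling such that any two
adjacent vertices get distinct weights. -/
def IsLocalAntimagicTotal (G : SimpleGraph V) [DecidableRel G.Adj]
    (fv : V → ℕ) (fe : Sym2 V → ℕ) : Prop :=
  IsTotalLabeling G fv fe ∧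
    ∀ ⦃u v : V⦄, G.Adj u v → latWeight G fv fe u ≠ latWeight G fv fe v

/-- The local antimagic total chromatic number `χ_lat(G)` : the minimum number of distinct
vertex weights taken over all local antimagic total labelings of `G`. -/
noncomputable def chiLat (G : SimpleGraph V) [DecidableRel G.Adj] : ℕ :=
  sInf {c | ∃ fv fe, IsLocalAntimagicTotal G fv fe ∧
    (Finset.univ.image (latWeight G fv fe)).card = c}

instance {W : Type*} (r : W → W → Prop) [DecidableEq W] [DecidableRel r] :
    DecidableRel (SimpleGraph.fromRel r).Adj :=
  fun a b => decidable_of_iff _ (SimpleGraph.fromRel_adj r a b).symm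

/-- Adjacency for the spider `Sp(1^[m], 2^[n])` : the center `x = none` is adjacent to each
leaf `y i = some (Sum.inl i)` and to each `u j = some (Sum.inr (j, false))`, and each `u j`
is adjacent to the leaf `v j = some (Sum.inr (j, true))`. -/
def spider12R (m n : ℕ) :
    Option (Fin m ⊕ Fin n × Bool) → Option (Fin m ⊕ Fin n × Bool) → Bool
  | none, some (Sum.inl _) => true
  | none, some (Sum.inr (_, false)) => true
  | some (Sum.inr (j, false)), some (Sum.inr (j', true)) => decide (j = j')
  | _, _ => false

/-- The spider `Sp(1^[m], 2^[n])` with `m` legs of length `1` and `n` legs of length `2`. -/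
abbrev spider12 (m n : ℕ) : SimpleGraph (Option (Fin m ⊕ Fin n × Bool)) :=
  SimpleGraph.fromRel (fun a b => spider12R m n a b = true)

/- ### Auxiliary lemmas -/

lemma bijOn_of_inj {α : Type*} [Fintype α] [DecidableEq α] (f : α → ℕ) (N : ℕ)
    (hcard : Fintype.card α = N)
    (hmaps : ∀ a, f a ∈ Finset.Icc 1 N)
    (hinj : ∀ a b, f a = f b → a = b) :
    Set.BijOn f Set.univ (Set.Icc 1 N) := by
  have himg : Finset.univ.image f = Finset.Icc 1 N := by
    apply Finset.eq_of_subset_of_card_le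
    · intro y hy
      obtain ⟨a, -, rfl⟩ := Finset.mem_image.mp hy
      exact hmaps a
    · rw [Finset.card_image_of_injective _ (fun {a b} => hinj a b), Finset.card_univ, hcard, Nat.card_Icc]
      omega
  refine ⟨fun a _ => ?_, Function.Injective.injOn (fun {a b} => hinj a b), fun y hy => ?_⟩
  · have := hmaps a
    simp only [Finset.mem_Icc] at this
    exact this
  · have hy' : y ∈ Finset.Icc 1 N := by
      simp only [Finset.mem_Icc]; simpa using hy
    rw [← himg] at hy'
    obtain ⟨a, -, rfl⟩ := Finset.mem_image.mp hy'
    exact ⟨a, Set.mem_univ a, rfl⟩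

lemma isTotalLabeling_of (G : SimpleGraph V) [DecidableRel G.Adj]
    (fv : V → ℕ) (fe : Sym2 V → ℕ)
    (hcard : Fintype.card (V ⊕ G.edgeSet) = Fintype.card V + G.edgeFinset.card)
    (hmaps : ∀ a : V ⊕ G.edgeSet,
      Sum.elim fv (fun e : G.edgeSet => fe (e : Sym2 V)) a ∈
        Finset.Icc 1 (Fintype.card V + G.edgeFinset.card))
    (hinj : ∀ a b, Sum.elim fv (fun e : G.edgeSet => fe (e : Sym2 V)) a = Sum.elim fv (fun e : G.edgeSet => fe (e : Sym2 V)) b → a = b) :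
    IsTotalLabeling G fv fe :=
  bijOn_of_inj _ _ hcard hmaps hinj

lemma chiLat_eq_two_of (G : SimpleGraph V) [DecidableRel G.Adj]
    (u v : V) (huv : G.Adj u v) (fv : V → ℕ) (fe : Sym2 V → ℕ)
    (hl : IsLocalAntimagicTotal G fv fe)
    (h2 : (Finset.univ.image (latWeight G fv fe)).card = 2) :
    chiLat G = 2 := by
  apply le_antisymm
  · exact Nat.sInf_le ⟨fv, fe, hl, h2⟩
  · have hmem : 2 ∈ {c | ∃ fv fe, IsLocalAntimagicTotal G fv fe ∧
        (Finset.univ.image (latWeight G fv fe)).card = c} := ⟨fv, fe, hl, h2⟩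
    refine le_csInf ⟨2, hmem⟩ ?_
    rintro c ⟨fv', fe', ⟨-, hne⟩, rfl⟩
    exact Finset.one_lt_card.mpr
      ⟨_, Finset.mem_image_of_mem _ (Finset.mem_univ u),
       _, Finset.mem_image_of_mem _ (Finset.mem_univ v), hne huv⟩

/- ### Explicit labelings for the four cases -/

def gv12 : Option (Fin 1 ⊕ Fin 2 × Bool) → ℕ
  | none => 9
  | some (Sum.inl _) => 8
  | some (Sum.inr (⟨0, _⟩, false)) => 2
  | some (Sum.inr (⟨0, _⟩, true)) => 10
  | some (Sum.inr (_, false)) => 5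
  | some (Sum.inr (_, true)) => 11

def ge12 : Option (Fin 1 ⊕ Fin 2 × Bool) → Option (Fin 1 ⊕ Fin 2 × Bool) → ℕ
  | none, some (Sum.inl _) => 4
  | none, some (Sum.inr (⟨0, _⟩, false)) => 3
  | none, some (Sum.inr (⟨1, _⟩, false)) => 1
  | some (Sum.inr (⟨0, _⟩, false)), some (Sum.inr (⟨0, _⟩, true)) => 7
  | some (Sum.inr (⟨1, _⟩, false)), some (Sum.inr (⟨1, _⟩, true)) => 6
  | _, _ => 0

def fe12 : Sym2 (Option (Fin 1 ⊕ Fin 2 × Bool)) → ℕ :=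
  Sym2.lift ⟨fun a b => ge12 a b + ge12 b a, fun a b => add_comm _ _⟩

def gv21 : Option (Fin 2 ⊕ Fin 1 × Bool) → ℕ
  | none => 4
  | some (Sum.inl ⟨0, _⟩) => 5
  | some (Sum.inl _) => 9
  | some (Sum.inr (_, false)) => 1
  | some (Sum.inr (_, true)) => 8

def ge21 : Option (Fin 2 ⊕ Fin 1 × Bool) → Option (Fin 2 ⊕ Fin 1 × Bool) → ℕ
  | none, some (Sum.inl ⟨0, _⟩) => 6
  | none, some (Sum.inl ⟨1, _⟩) => 2
  | none, some (Sum.inr (_, false)) => 3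
  | some (Sum.inr (_, false)), some (Sum.inr (_, true)) => 7
  | _, _ => 0

def fe21 : Sym2 (Option (Fin 2 ⊕ Fin 1 × Bool)) → ℕ :=
  Sym2.lift ⟨fun a b => ge21 a b + ge21 b a, fun a b => add_comm _ _⟩

def gv31 : Option (Fin 3 ⊕ Fin 1 × Bool) → ℕ
  | none => 7
  | some (Sum.inl ⟨0, _⟩) => 8
  | some (Sum.inl ⟨1, _⟩) => 9
  | some (Sum.inl _) => 10
  | some (Sum.inr (_, false)) => 5
  | some (Sum.inr (_, true)) => 11

def ge31 : Option (Fin 3 ⊕ Fin 1 × Bool) → Option (Fin 3 ⊕ Fin 1 × Bool) → ℕ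
  | none, some (Sum.inl ⟨0, _⟩) => 4
  | none, some (Sum.inl ⟨1, _⟩) => 3
  | none, some (Sum.inl ⟨2, _⟩) => 2
  | none, some (Sum.inr (_, false)) => 1
  | some (Sum.inr (_, false)), some (Sum.inr (_, true)) => 6
  | _, _ => 0

def fe31 : Sym2 (Option (Fin 3 ⊕ Fin 1 × Bool)) → ℕ :=
  Sym2.lift ⟨fun a b => ge31 a b + ge31 b a, fun a b => add_comm _ _⟩

def gv32 : Option (Fin 3 ⊕ Fin 2 × Bool) → ℕ
  | none => 4
  | some (Sum.inl ⟨0, _⟩) => 11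
  | some (Sum.inl ⟨1, _⟩) => 13
  | some (Sum.inl _) => 15
  | some (Sum.inr (⟨0, _⟩, false)) => 6
  | some (Sum.inr (⟨0, _⟩, true)) => 12
  | some (Sum.inr (_, false)) => 9
  | some (Sum.inr (_, true)) => 14

def ge32 : Option (Fin 3 ⊕ Fin 2 × Bool) → Option (Fin 3 ⊕ Fin 2 × Bool) → ℕ
  | none, some (Sum.inl ⟨0, _⟩) => 7
  | none, some (Sum.inl ⟨1, _⟩) => 5
  | none, some (Sum.inl ⟨2, _⟩) => 3
  | none, some (Sum.inr (⟨0, _⟩, false)) => 2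
  | none, some (Sum.inr (⟨1, _⟩, false)) => 1
  | some (Sum.inr (⟨0, _⟩, false)), some (Sum.inr (⟨0, _⟩, true)) => 10
  | some (Sum.inr (⟨1, _⟩, false)), some (Sum.inr (⟨1, _⟩, true)) => 8
  | _, _ => 0

def fe32 : Sym2 (Option (Fin 3 ⊕ Fin 2 × Bool)) → ℕ :=
  Sym2.lift ⟨fun a b => ge32 a b + ge32 b a, fun a b => add_comm _ _⟩

set_option synthInstance.maxHeartbeats 1000000 in
set_option synthInstance.maxSize 4096 in
set_option maxHeartbeats 2000000 in
lemma chiLat_spider_12 : chiLat (spider12 1 2) = 2 :=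
  chiLat_eq_two_of (spider12 1 2) none (some (Sum.inr (0, false))) (by decide)
    gv12 fe12
    ⟨isTotalLabeling_of (spider12 1 2) gv12 fe12 (by decide) (by decide)
      (by decide), by decide⟩ (by decide)

set_option synthInstance.maxHeartbeats 1000000 in
set_option synthInstance.maxSize 4096 in
set_option maxHeartbeats 2000000 in
lemma chiLat_spider_21 : chiLat (spider12 2 1) = 2 :=
  chiLat_eq_two_of (spider12 2 1) none (some (Sum.inr (0, false))) (by decide)
    gv21 fe21
    ⟨isTotalLabeling_of (spider12 2 1) gv21 fe21 (by decide) (by decide)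
      (by decide), by decide⟩ (by decide)

set_option synthInstance.maxHeartbeats 1000000 in
set_option synthInstance.maxSize 4096 in
set_option maxHeartbeats 2000000 in
lemma chiLat_spider_31 : chiLat (spider12 3 1) = 2 :=
  chiLat_eq_two_of (spider12 3 1) none (some (Sum.inr (0, false))) (by decide)
    gv31 fe31
    ⟨isTotalLabeling_of (spider12 3 1) gv31 fe31 (by decide) (by decide)
      (by decide), by decide⟩ (by decide)

set_option synthInstance.maxHeartbeats 1000000 in
set_option synthInstance.maxSize 4096 in
set_option maxHeartbeats 2000000 in
lemma chiLat_spider_32 : chiLat (spider12 3 2) = 2 :=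
  chiLat_eq_two_of (spider12 3 2) none (some (Sum.inr (0, false))) (by decide)
    gv32 fe32
    ⟨isTotalLabeling_of (spider12 3 2) gv32 fe32 (by decide) (by decide)
      (by decide), by decide⟩ (by decide)

/-- For `(m,n) ∈ {(1,2), (2,1), (3,1), (3,2)}`, the spider `Sp(1^[m], 2^[n])` has local
antimagic total chromatic number `2`. -/
theorem chiLat_spider12_eq_two (m n : ℕ)
    (h : (m, n) ∈ ([(1, 2), (2, 1), (3, 1), (3, 2)] : List (ℕ × ℕ))) :
    chiLat (spider12 m n) = 2 := by
  simp only [List.mem_cons, List.not_mem_nil, or_false] at h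
  rcases h with h | h | h | h <;>
    (injection h with h1 h2; subst h1; subst h2)
  · exact chiLat_spider_12
  · exact chiLat_spider_21
  · exact chiLat_spider_31
  · exact chiLat_spider_32
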